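/- arXiv:1908.04452 — 4 statements merged into one kernel-verified Lean document; each statement's English description precedes it below -/
import Mathlib

section
/- For any feasible single-machine schedule σ of n jobs with release dates, if C_[i](σ) denotes the completion time of the job finishing in the i-th position of σ, and C'_i denotes the completion time of the job finishing in the i-th position of the preemptive schedule built by the SRPT (Shortest Remaining Processing Time) rule, then C_[i](σ) ≥ C'_i for every position i. -/
open Finset

/-- The job chosen by the SRPT rule at time `t`, given the amount of work `w j`
already performed on each job `j`: among the released, unfinished jobs, one with
the shortest remaining processing time (ties broken by smallest index). -/
def srptChosen {n : ℕ} (r p : Fin n → ℕ) (t : ℕ) (w : Fin n → ℕ) : WithBot (Fin n) :=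
  let avail := Finset.univ.filter fun j => r j ≤ t ∧ w j < p j
  (avail.filter fun j => ∀ k ∈ avail, p j - w j ≤ p k - w k).min

/-- `srptWork r p t j` is the amount of work performed on job `j` during `[0, t)`
by the preemptive SRPT schedule. -/
def srptWork {n : ℕ} (r p : Fin n → ℕ) : ℕ → Fin n → ℕ
  | 0 => fun _ => 0
  | t + 1 => fun j =>
      srptWork r p t j +
        (if srptChosen r p t (srptWork r p t) = (j : WithBot (Fin n)) then 1 else 0)

/-- Completion time of job `j` in the preemptive SRPT schedule. -/
noncomputable def srptC {n : ℕ} (r p : Fin n → ℕ) (j : Fin n) : ℕ :=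
  sInf {t | srptWork r p t j = p j}

namespace ChuAux
variable {n : ℕ}

/-- min over k-element subsets of `U` of the sum of `f`: "sum of k smallest values". -/
noncomputable def psum (U : Finset (Fin n)) (f : Fin n → ℕ) (k : ℕ) : ℕ :=
  sInf ((fun T => ∑ j ∈ T, f j) '' {T : Finset (Fin n) | T ⊆ U ∧ T.card = k})

lemma psum_le {U : Finset (Fin n)} {f : Fin n → ℕ} {k : ℕ} {T : Finset (Fin n)}
    (hT : T ⊆ U) (hc : T.card = k) : psum U f k ≤ ∑ j ∈ T, f j :=
  Nat.sInf_le ⟨T, ⟨hT, hc⟩, rfl⟩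

lemma psum_exists {U : Finset (Fin n)} (f : Fin n → ℕ) {k : ℕ} (h : k ≤ U.card) :
    ∃ T, T ⊆ U ∧ T.card = k ∧ ∑ j ∈ T, f j = psum U f k := by
  obtain ⟨T, hT, hc⟩ := Finset.exists_subset_card_eq h
  have hne : ((fun T => ∑ j ∈ T, f j) '' {T : Finset (Fin n) | T ⊆ U ∧ T.card = k}).Nonempty :=
    ⟨_, ⟨T, ⟨hT, hc⟩, rfl⟩⟩
  obtain ⟨T', hT', hval⟩ := Nat.sInf_mem hne
  exact ⟨T', hT'.1, hT'.2, hval⟩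

lemma psum_zero_of_big {U : Finset (Fin n)} {f : Fin n → ℕ} {k : ℕ} (h : U.card < k) :
    psum U f k = 0 := by
  have : ((fun T => ∑ j ∈ T, f j) '' {T : Finset (Fin n) | T ⊆ U ∧ T.card = k}) = ∅ := by
    ext x
    simp only [Set.mem_image, Set.mem_setOf_eq, Set.mem_empty_iff_false, iff_false, not_exists]
    rintro T ⟨⟨hT, hc⟩, -⟩
    exact absurd (Finset.card_le_card hT) (by omega)
  rw [psum, this, Nat.sInf_empty]

lemma psum_mono {U : Finset (Fin n)} {f g : Fin n → ℕ} {k : ℕ}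
    (h : ∀ j ∈ U, f j ≤ g j) : psum U f k ≤ psum U g k := by
  rcases le_or_gt k U.card with hk | hk
  · obtain ⟨T, hT, hc, hval⟩ := psum_exists g hk
    calc psum U f k ≤ ∑ j ∈ T, f j := psum_le hT hc
      _ ≤ ∑ j ∈ T, g j := Finset.sum_le_sum fun j hj => h j (hT hj)
      _ = psum U g k := hval
  · rw [psum_zero_of_big hk]; exact Nat.zero_le _

lemma psum_all_zero {U : Finset (Fin n)} {f : Fin n → ℕ} {k : ℕ}
    (h : ∀ j ∈ U, f j = 0) : psum U f k = 0 := by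
  rcases le_or_gt k U.card with hk | hk
  · obtain ⟨T, hT, hc⟩ := Finset.exists_subset_card_eq hk
    have : ∑ j ∈ T, f j = 0 := Finset.sum_eq_zero fun j hj => h j (hT hj)
    exact Nat.le_zero.mp (this ▸ psum_le hT hc)
  · exact psum_zero_of_big hk

/-- The key decrement step: SRPT decrements a minimal positive value (or all values on `U`
are zero), the other schedule decrements at most one value by at most one. -/
lemma step_dec {U : Finset (Fin n)} {f g f' g' : Fin n → ℕ}
    (hfg : ∀ k, psum U f k ≤ psum U g k)
    (hf'le : ∀ j, f' j ≤ f j)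
    (hf' : ((∀ j, f' j = f j) ∧ ∀ j ∈ U, f j = 0) ∨
      ∃ a ∈ U, 0 < f a ∧ (∀ j ∈ U, 0 < f j → f a ≤ f j) ∧ f' a + 1 = f a ∧
        ∀ j, j ≠ a → f' j = f j)
    (hg'ge : ∀ T : Finset (Fin n), ∑ j ∈ T, g j ≤ ∑ j ∈ T, g' j + 1) :
    ∀ k, psum U f' k ≤ psum U g' k := by
  intro k
  have hmono : psum U f' k ≤ psum U f k := psum_mono fun j _ => hf'le j
  rcases Nat.eq_zero_or_pos (psum U f k) with h0 | hpos
  · exact le_trans hmono (h0 ▸ Nat.zero_le _)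
  have hk : k ≤ U.card := by
    by_contra h
    rw [psum_zero_of_big (lt_of_not_ge h)] at hpos; omega
  rcases hf' with ⟨-, hzero⟩ | ⟨a, haU, hapos, hamin, haeq, haoff⟩
  · rw [psum_all_zero hzero] at hpos; omega
  obtain ⟨T, hTU, hTc, hTval⟩ := psum_exists f hk
  obtain ⟨T2, hT2U, hT2c, hT2val⟩ := psum_exists g' hk
  have hgg' : psum U g k ≤ psum U g' k + 1 := by
    calc psum U g k ≤ ∑ j ∈ T2, g j := psum_le hT2U hT2c
      _ ≤ ∑ j ∈ T2, g' j + 1 := hg'ge T2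
      _ = psum U g' k + 1 := by rw [hT2val]
  have key : ∃ T'', T'' ⊆ U ∧ T''.card = k ∧ ∑ j ∈ T'', f' j + 1 ≤ psum U f k := by
    by_cases haT : a ∈ T
    · refine ⟨T, hTU, hTc, ?_⟩
      rw [← hTval, ← Finset.sum_erase_add _ f haT, ← Finset.sum_erase_add _ f' haT]
      have heq : ∑ j ∈ T.erase a, f' j = ∑ j ∈ T.erase a, f j :=
        Finset.sum_congr rfl fun j hj => haoff j (Finset.ne_of_mem_erase hj)
      omega
    · have hex : ∃ j0 ∈ T, 0 < f j0 := by
        by_contra hcon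
        push_neg at hcon
        have : ∑ j ∈ T, f j = 0 := Finset.sum_eq_zero fun j hj => by have := hcon j hj; omega
        omega
      obtain ⟨j0, hj0T, hj0pos⟩ := hex
      have hanotin : a ∉ T.erase j0 := fun h => haT (Finset.mem_of_mem_erase h)
      refine ⟨insert a (T.erase j0), ?_, ?_, ?_⟩
      · intro x hx
        rcases Finset.mem_insert.mp hx with rfl | hx
        · exact haU
        · exact hTU (Finset.mem_of_mem_erase hx)
      · rw [Finset.card_insert_of_notMem hanotin, Finset.card_erase_of_mem hj0T, hTc]
        have : 0 < T.card := Finset.card_pos.mpr ⟨j0, hj0T⟩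
        omega
      · rw [Finset.sum_insert hanotin]
        have h1 : ∑ j ∈ T.erase j0, f' j = ∑ j ∈ T.erase j0, f j :=
          Finset.sum_congr rfl fun j hj => haoff j (by rintro rfl; exact haT (Finset.mem_of_mem_erase hj))
        have h2 : ∑ j ∈ T.erase j0, f j + f j0 = ∑ j ∈ T, f j := Finset.sum_erase_add _ _ hj0T
        have h3 : f a ≤ f j0 := hamin j0 (hTU hj0T) hj0pos
        omega
  obtain ⟨T'', hU'', hc'', hs''⟩ := key
  have h4 : psum U f' k ≤ ∑ j ∈ T'', f' j := psum_le hU'' hc''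
  have h5 := hfg k
  omega

lemma psum_extend {U U' : Finset (Fin n)} (hUU' : U ⊆ U') {f g : Fin n → ℕ}
    (heq : ∀ j ∈ U', j ∉ U → f j = g j)
    (h : ∀ k, psum U f k ≤ psum U g k) : ∀ k, psum U' f k ≤ psum U' g k := by
  intro k
  rcases le_or_gt k U'.card with hk | hk
  · obtain ⟨T, hTU, hTc, hTval⟩ := psum_exists g hk
    have hT1U : T ∩ U ⊆ U := Finset.inter_subset_right
    have hT1card : (T ∩ U).card ≤ U.card := Finset.card_le_card hT1U
    obtain ⟨T1', hT1'U, hT1'c, hT1'val⟩ := psum_exists (U := U) f hT1card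
    have h1 : ∑ j ∈ T1', f j ≤ ∑ j ∈ T ∩ U, g j := by
      rw [hT1'val]
      exact le_trans (h _) (psum_le hT1U rfl)
    have hdisj : Disjoint T1' (T \ U) :=
      Finset.disjoint_left.mpr fun x hx hx2 => (Finset.mem_sdiff.mp hx2).2 (hT1'U hx)
    have hsub : T1' ∪ (T \ U) ⊆ U' := by
      intro x hx
      rcases Finset.mem_union.mp hx with hx | hx
      · exact hUU' (hT1'U hx)
      · exact hTU (Finset.mem_sdiff.mp hx).1
    have hcard : (T1' ∪ (T \ U)).card = k := by
      rw [Finset.card_union_of_disjoint hdisj, hT1'c]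
      rw [← hTc, ← Finset.card_inter_add_card_sdiff T U]
    have hsum2 : ∑ j ∈ T \ U, f j = ∑ j ∈ T \ U, g j :=
      Finset.sum_congr rfl fun j hj => by
        obtain ⟨hj1, hj2⟩ := Finset.mem_sdiff.mp hj
        exact heq j (hTU hj1) hj2
    calc psum U' f k ≤ ∑ j ∈ T1' ∪ (T \ U), f j := psum_le hsub hcard
      _ = ∑ j ∈ T1', f j + ∑ j ∈ T \ U, f j := Finset.sum_union hdisj
      _ ≤ ∑ j ∈ T ∩ U, g j + ∑ j ∈ T \ U, g j := by omega
      _ = ∑ j ∈ T, g j := Finset.sum_inter_add_sum_sdiff T U g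
      _ = psum U' g k := hTval
  · rw [psum_zero_of_big hk]; exact Nat.zero_le _

lemma chosen_spec {r p : Fin n → ℕ} {t : ℕ} {w : Fin n → ℕ} {a : Fin n}
    (h : srptChosen r p t w = (a : WithBot (Fin n))) :
    r a ≤ t ∧ w a < p a ∧ ∀ k, r k ≤ t → w k < p k → p a - w a ≤ p k - w k := by
  have h' := Finset.mem_of_min h
  simp only [mem_filter, mem_univ, true_and] at h'
  refine ⟨h'.1.1, h'.1.2, fun k hk1 hk2 => h'.2 k ?_⟩
  simp [hk1, hk2]

lemma chosen_bot {r p : Fin n → ℕ} {t : ℕ} {w : Fin n → ℕ}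
    (h : srptChosen r p t w = (⊥ : WithBot (Fin n))) :
    ∀ j, r j ≤ t → ¬ w j < p j := by
  intro j hj hw
  have hne : (Finset.univ.filter fun j => r j ≤ t ∧ w j < p j).Nonempty := ⟨j, by simp [hj, hw]⟩
  obtain ⟨a, ha, hmin⟩ := Finset.exists_min_image _ (fun j => p j - w j) hne
  have hmem : a ∈ (Finset.univ.filter fun j => r j ≤ t ∧ w j < p j).filter
      fun j => ∀ k ∈ Finset.univ.filter fun j => r j ≤ t ∧ w j < p j, p j - w j ≤ p k - w k :=
    Finset.mem_filter.mpr ⟨ha, fun k hk => hmin k hk⟩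
  have hemp := Finset.min_eq_top.mp h
  rw [hemp] at hmem
  exact absurd hmem (Finset.notMem_empty a)

lemma srptWork_le (r p : Fin n → ℕ) : ∀ t j, srptWork r p t j ≤ p j := by
  intro t
  induction t with
  | zero => intro j; exact Nat.zero_le _
  | succ t ih =>
    intro j
    show srptWork r p t j + (if _ then 1 else 0) ≤ p j
    split
    · next h =>
      have := (chosen_spec h).2.1
      omega
    · have := ih j; omega

lemma srptWork_mono (r p : Fin n → ℕ) (t : ℕ) (j : Fin n) :
    srptWork r p t j ≤ srptWork r p (t + 1) j := Nat.le_add_right _ _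

lemma srptWork_zero (r p : Fin n → ℕ) {t : ℕ} {j : Fin n} (h : t ≤ r j) :
    srptWork r p t j = 0 := by
  induction t with
  | zero => rfl
  | succ t ih =>
    show srptWork r p t j + (if _ then 1 else 0) = 0
    rw [ih (by omega)]
    split
    · next hc =>
      have := (chosen_spec hc).1
      omega
    · rfl
/-- remaining work of job `j` at time `t` in the SRPT schedule -/
noncomputable def remA (r p : Fin n → ℕ) (t : ℕ) (j : Fin n) : ℕ := p j - srptWork r p t j
/-- remaining work of job `j` at time `t` in the schedule with start times `S` -/
def remB (p S : Fin n → ℕ) (t : ℕ) (j : Fin n) : ℕ := p j - min (p j) (t - S j)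
def rel (r : Fin n → ℕ) (t : ℕ) : Finset (Fin n) := Finset.univ.filter fun j => r j ≤ t

lemma invariant (r p S : Fin n → ℕ)
    (hrel : ∀ j, r j ≤ S j)
    (hdisj : ∀ j k : Fin n, j ≠ k → S j + p j ≤ S k ∨ S k + p k ≤ S j) :
    ∀ t k, psum (rel r t) (remA r p t) k ≤ psum (rel r t) (remB p S t) k := by
  intro t
  induction t with
  | zero =>
    intro k
    have he : remA r p 0 = remB p S 0 := by
      funext j
      show p j - 0 = p j - min (p j) (0 - S j)
      omega
    rw [he]
  | succ t ih =>
    -- step 1: over `rel r t`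
    have step1 : ∀ k, psum (rel r t) (remA r p (t+1)) k ≤ psum (rel r t) (remB p S (t+1)) k := by
      apply step_dec ih
      · intro j
        show p j - srptWork r p (t+1) j ≤ p j - srptWork r p t j
        have : srptWork r p t j ≤ srptWork r p (t+1) j := Nat.le_add_right _ _
        omega
      · -- the SRPT decrement structure
        cases hc : srptChosen r p t (srptWork r p t) with
        | bot =>
          left
          constructor
          · intro j
            show p j - (srptWork r p t j + if _ then 1 else 0) = p j - srptWork r p t j
            rw [hc]
            rw [if_neg (by simp : ¬ ((⊥ : WithBot (Fin n)) = (j : WithBot (Fin n))))]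
            omega
          · intro j hj
            have hjr : r j ≤ t := by simpa [rel] using hj
            have := chosen_bot hc j hjr
            show p j - srptWork r p t j = 0
            omega
        | coe a =>
          right
          obtain ⟨har, haw, hamin⟩ := chosen_spec (a := a) hc
          refine ⟨a, by simp [rel, har], ?_, ?_, ?_, ?_⟩
          · show 0 < p a - srptWork r p t a; omega
          · intro j hj hjpos
            have hjr : r j ≤ t := by simpa [rel] using hj
            have hjw : srptWork r p t j < p j := by
              have : 0 < p j - srptWork r p t j := hjpos
              omega
            exact hamin j hjr hjw
          · show (p a - (srptWork r p t a + if _ then 1 else 0)) + 1 = p a - srptWork r p t a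
            rw [hc, if_pos rfl]
            omega
          · intro j hja
            show p j - (srptWork r p t j + if _ then 1 else 0) = p j - srptWork r p t j
            rw [hc, if_neg (fun h => hja (WithBot.coe_inj.mp h).symm)]
            omega
      · -- the σ schedule decreases total by at most 1 on any T
        intro T
        by_cases hb : ∃ b : Fin n, S b ≤ t ∧ t < S b + p b
        · obtain ⟨b, hb1, hb2⟩ := hb
          have hoff : ∀ j, j ≠ b → remB p S (t+1) j = remB p S t j := by
            intro j hj
            have : ¬ (S j ≤ t ∧ t < S j + p j) := by
              intro hcon
              rcases hdisj j b hj with h | h <;> omega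
            show p j - min (p j) (t + 1 - S j) = p j - min (p j) (t - S j)
            omega
          by_cases hbT : b ∈ T
          · rw [← Finset.sum_erase_add _ (remB p S t) hbT, ← Finset.sum_erase_add _ (remB p S (t+1)) hbT]
            have heq : ∑ j ∈ T.erase b, remB p S t j = ∑ j ∈ T.erase b, remB p S (t+1) j :=
              Finset.sum_congr rfl fun j hj => (hoff j (Finset.ne_of_mem_erase hj)).symm
            have h1 : remB p S t b ≤ remB p S (t+1) b + 1 := by
              show p b - min (p b) (t - S b) ≤ p b - min (p b) (t + 1 - S b) + 1
              omega
            omega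
          · have heq : ∑ j ∈ T, remB p S t j = ∑ j ∈ T, remB p S (t+1) j :=
              Finset.sum_congr rfl fun j hj => (hoff j (by rintro rfl; exact hbT hj)).symm
            omega
        · push_neg at hb
          have heq : ∑ j ∈ T, remB p S t j = ∑ j ∈ T, remB p S (t+1) j :=
            Finset.sum_congr rfl fun j hj => by
              have := hb j
              show p j - min (p j) (t - S j) = p j - min (p j) (t + 1 - S j)
              omega
          omega
    -- step 2: extend to `rel r (t+1)`
    apply psum_extend (U := rel r t)
    · intro j hj
      simp only [rel, Finset.mem_filter, Finset.mem_univ, true_and] at hj ⊢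
      omega
    · intro j hj1 hj2
      have hr : r j = t + 1 := by
        simp only [rel, Finset.mem_filter, Finset.mem_univ, true_and] at hj1 hj2
        omega
      have h1 : srptWork r p (t+1) j = 0 := srptWork_zero r p (by omega)
      have h2 : t + 1 ≤ S j := le_trans (by omega) (hrel j)
      show p j - srptWork r p (t+1) j = p j - min (p j) (t + 1 - S j)
      rw [h1]
      omega
    · exact step1
lemma count_le (r p S : Fin n → ℕ)
    (hrel : ∀ j, r j ≤ S j)
    (hdisj : ∀ j k : Fin n, j ≠ k → S j + p j ≤ S k ∨ S k + p k ≤ S j) (t : ℕ) :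
    (Finset.univ.filter fun j => S j + p j ≤ t).card ≤
      (Finset.univ.filter fun j => srptC r p j ≤ t).card := by
  set D := Finset.univ.filter fun j : Fin n => S j + p j ≤ t with hD
  have hDU : D ⊆ rel r t := by
    intro j hj
    simp only [hD, mem_filter, mem_univ, true_and] at hj
    have := hrel j
    simp only [rel, mem_filter, mem_univ, true_and]
    omega
  have hB0 : psum (rel r t) (remB p S t) D.card ≤ 0 := by
    have : ∑ j ∈ D, remB p S t j = 0 := Finset.sum_eq_zero fun j hj => by
      simp only [hD, mem_filter, mem_univ, true_and] at hj
      show p j - min (p j) (t - S j) = 0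
      omega
    exact this ▸ psum_le hDU rfl
  have hA0 : psum (rel r t) (remA r p t) D.card = 0 := by
    have := invariant r p S hrel hdisj t D.card
    omega
  obtain ⟨T, hTU, hTc, hTval⟩ := psum_exists (U := rel r t) (remA r p t)
    (le_trans (Finset.card_le_card hDU) le_rfl)
  rw [hA0] at hTval
  have hT : T ⊆ Finset.univ.filter fun j => srptC r p j ≤ t := by
    intro j hj
    have hj0 : remA r p t j = 0 := by
      have : remA r p t j ≤ ∑ i ∈ T, remA r p t i := Finset.single_le_sum (fun i _ => Nat.zero_le _) hj
      omega
    have hw : srptWork r p t j = p j := by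
      have h1 := srptWork_le r p t j
      show _
      simp only [remA] at hj0
      omega
    simp only [mem_filter, mem_univ, true_and]
    exact Nat.sInf_le hw
  calc D.card = T.card := hTc.symm
    _ ≤ _ := Finset.card_le_card hT

lemma order_stat {c1 c2 : Fin n → ℕ}
    (h : ∀ t, (Finset.univ.filter fun j => c2 j ≤ t).card ≤
      (Finset.univ.filter fun j => c1 j ≤ t).card) (i : Fin n) :
    c1 (Tuple.sort c1 i) ≤ c2 (Tuple.sort c2 i) := by
  set t := c2 (Tuple.sort c2 i) with ht
  -- at least i+1 jobs have c2 ≤ t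
  have h2 : (i : ℕ) + 1 ≤ (Finset.univ.filter fun j => c2 j ≤ t).card := by
    have hinj : ∀ x ∈ Finset.Iic i, (Tuple.sort c2 x : Fin n) ∈
        Finset.univ.filter fun j => c2 j ≤ t := by
      intro x hx
      simp only [Finset.mem_Iic] at hx
      simp only [mem_filter, mem_univ, true_and]
      exact Tuple.monotone_sort c2 hx
    have := Finset.card_le_card_of_injOn (fun x => Tuple.sort c2 x) hinj
      (fun a _ b _ hab => (Tuple.sort c2).injective hab)
    simpa using this
  have h1 := le_trans h2 (h t)
  -- transfer to sorted positions of c1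
  have hcard : (Finset.univ.filter fun k : Fin n => c1 (Tuple.sort c1 k) ≤ t).card =
      (Finset.univ.filter fun j => c1 j ≤ t).card := by
    apply Finset.card_bij (fun k _ => Tuple.sort c1 k)
    · intro k hk
      simp only [mem_filter, mem_univ, true_and] at hk ⊢
      exact hk
    · intro a _ b _ hab
      exact (Tuple.sort c1).injective hab
    · intro j hj
      refine ⟨(Tuple.sort c1).symm j, ?_, by simp⟩
      simp only [mem_filter, mem_univ, true_and, Equiv.apply_symm_apply] at hj ⊢
      simpa using hj
  by_contra hcon
  push_neg at hcon
  have hsub : (Finset.univ.filter fun k : Fin n => c1 (Tuple.sort c1 k) ≤ t) ⊆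
      Finset.Iio i := by
    intro k hk
    simp only [mem_filter, mem_univ, true_and] at hk
    simp only [Finset.mem_Iio]
    by_contra hik
    push_neg at hik
    have hm : c1 (Tuple.sort c1 i) ≤ c1 (Tuple.sort c1 k) := Tuple.monotone_sort c1 hik
    omega
  have := Finset.card_le_card hsub
  rw [hcard] at this
  have hIio : (Finset.Iio i).card = (i : ℕ) := by simp
  omega

end ChuAux

/-- Chu's theorem: for any feasible non-preemptive single-machine schedule
(given by start times `S` respecting release dates, with non-overlapping
processing intervals), the `i`-th smallest completion time is at least the
`i`-th smallest completion time of the preemptive SRPT schedule. -/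
theorem chu_srpt_underestimate (n : ℕ) (r p : Fin n → ℕ) (hp : ∀ j, 0 < p j)
    (S : Fin n → ℕ)
    (hrel : ∀ j, r j ≤ S j)
    (hdisj : ∀ j k : Fin n, j ≠ k → S j + p j ≤ S k ∨ S k + p k ≤ S j)
    (i : Fin n) :
    srptC r p (Tuple.sort (srptC r p) i) ≤
      (fun j => S j + p j) (Tuple.sort (fun j => S j + p j) i) := by
  exact ChuAux.order_stat (ChuAux.count_le r p S hrel hdisj) i
end

section
/- For the two-dedicated-processor total completion time problem P2|fix_j, r_j|∑C_j, the quantity LBTC = Lb1 + Lb2, where Lb1 = (1/2)·Lb(P1-relaxation ∑C_j) + ∑_{j ∈ P_1} p_j/4 and Lb2 = (1/2)·Lb(P2-relaxation ∑C_j) + ∑_{j ∈ P_2} p_j/4, is a valid lower bound on the optimal total completion time, where each Lb of a single-machine problem is the total completion time of the preemptive SRPT schedule after splitting each mono-processor job into two halves. -/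
open Finset

/-- Two jobs completing at `c₁, c₂` with processing times `q₁, q₂` do not
overlap on a machine. -/
def NoOv (c₁ q₁ c₂ q₂ : ℝ) : Prop := c₁ ≤ c₂ - q₂ ∨ c₂ ≤ c₁ - q₁

/-- Feasibility of a schedule of the split single-machine instance: each
mono-processor job `j ∈ P` is split into two halves (releases `r j` and
`r j + p j / 2`, processing times `p j / 2`, completions `Ch j 0`, `Ch j 1`),
and each bi-processor job `j ∈ P12` keeps its full processing time
(completion `D j`). -/
def SplitFeas (J : Type*) (P P12 : Finset J) (r p : J → ℝ)
    (Ch : J → Fin 2 → ℝ) (D : J → ℝ) : Prop :=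
  (∀ j ∈ P, ∀ k : Fin 2, r j + (k : ℕ) * (p j / 2) + p j / 2 ≤ Ch j k) ∧
  (∀ j ∈ P12, r j + p j ≤ D j) ∧
  (∀ j ∈ P, ∀ j' ∈ P, ∀ k k' : Fin 2, (j, k) ≠ (j', k') →
      NoOv (Ch j k) (p j / 2) (Ch j' k') (p j' / 2)) ∧
  (∀ j ∈ P, ∀ j' ∈ P12, ∀ k : Fin 2, NoOv (Ch j k) (p j / 2) (D j') (p j')) ∧
  (∀ j ∈ P12, ∀ j' ∈ P12, j ≠ j' → NoOv (D j) (p j) (D j') (p j'))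

lemma split_of_feas (J : Type*) [DecidableEq J] (P P12 : Finset J) (hP : Disjoint P P12)
    (r p : J → ℝ) (hp : ∀ j, 0 < p j) (C : J → ℝ)
    (hfeas : ∀ j, r j + p j ≤ C j)
    (hd : ∀ j ∈ P ∪ P12, ∀ k ∈ P ∪ P12, j ≠ k → NoOv (C j) (p j) (C k) (p k)) :
    SplitFeas J P P12 r p (fun j k => C j - p j / 2 + (k : ℕ) * (p j / 2)) C := by
  have hk1 : ∀ k : Fin 2, ((k : ℕ) : ℝ) ≤ 1 := by
    intro k; exact_mod_cast Nat.lt_succ_iff.mp k.isLt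
  have hk0 : ∀ k : Fin 2, (0 : ℝ) ≤ ((k : ℕ) : ℝ) := by
    intro k; positivity
  refine ⟨?_, ?_, ?_, ?_, ?_⟩
  · intro j _ k
    have := hfeas j
    simp only
    linarith
  · intro j _; exact hfeas j
  · intro j hj j' hj' k k' hne
    rcases eq_or_ne j j' with rfl | hjj
    · have hkk : k ≠ k' := by
        intro h; exact hne (by rw [h])
      fin_cases k <;> fin_cases k' <;> simp only [NoOv] <;>
        first
          | exact absurd rfl hkk
          | (left; push_cast; nlinarith [hp j])
          | (right; push_cast; nlinarith [hp j])
    · rcases hd j (mem_union_left _ hj) j' (mem_union_left _ hj') hjj with h | h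
      · left
        have := hk1 k; have := hk0 k'
        nlinarith [hp j, hp j']
      · right
        have := hk1 k'; have := hk0 k
        nlinarith [hp j, hp j']
  · intro j hj j' hj' k
    have hjj : j ≠ j' := fun h => (Finset.disjoint_left.mp hP hj) (h ▸ hj')
    rcases hd j (mem_union_left _ hj) j' (mem_union_right _ hj') hjj with h | h
    · left
      have := hk1 k
      nlinarith [hp j]
    · right
      have := hk0 k
      nlinarith [hp j]
  · intro j hj j' hj' hjj
    exact hd j (mem_union_right _ hj) j' (mem_union_right _ hj') hjj

/-- `LBTC = Lb1 + Lb2`, with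
`Lb1 = (1/2)·Lb(P1-relaxation) + ∑_{j ∈ P1} p j / 4` and
`Lb2 = (1/2)·Lb(P2-relaxation) + ∑_{j ∈ P2} p j / 4`, where each
`Lb(relaxation)` is a lower bound on the total completion time of every
feasible schedule of the corresponding split single-machine instance (as the
SRPT value is, by Chu's theorem), is a valid lower bound on the total
completion time of every feasible schedule of `P2|fix_j, r_j|∑C_j`. -/
theorem stmt5 (J : Type*) [Fintype J] [DecidableEq J]
    (P1 P2 P12 : Finset J)
    (h12 : Disjoint P1 P2) (h112 : Disjoint P1 P12) (h212 : Disjoint P2 P12)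
    (hcover : P1 ∪ P2 ∪ P12 = Finset.univ)
    (r p : J → ℝ) (hp : ∀ j, 0 < p j)
    (LbS1 LbS2 Lb1 Lb2 : ℝ)
    (hLbS1 : ∀ Ch D, SplitFeas J P1 P12 r p Ch D →
        LbS1 ≤ (∑ j ∈ P1, (Ch j 0 + Ch j 1)) + ∑ j ∈ P12, D j)
    (hLbS2 : ∀ Ch D, SplitFeas J P2 P12 r p Ch D →
        LbS2 ≤ (∑ j ∈ P2, (Ch j 0 + Ch j 1)) + ∑ j ∈ P12, D j)
    (hLb1 : Lb1 = (1 / 2) * LbS1 + ∑ j ∈ P1, p j / 4)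
    (hLb2 : Lb2 = (1 / 2) * LbS2 + ∑ j ∈ P2, p j / 4)
    (C : J → ℝ)
    (hfeas : ∀ j, r j + p j ≤ C j)
    (hd1 : ∀ j ∈ P1 ∪ P12, ∀ k ∈ P1 ∪ P12, j ≠ k → NoOv (C j) (p j) (C k) (p k))
    (hd2 : ∀ j ∈ P2 ∪ P12, ∀ k ∈ P2 ∪ P12, j ≠ k → NoOv (C j) (p j) (C k) (p k)) :
    Lb1 + Lb2 ≤ ∑ j, C j := by
  set Ch : J → Fin 2 → ℝ := fun j k => C j - p j / 2 + (k : ℕ) * (p j / 2) with hCh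
  have h1 := hLbS1 Ch C (split_of_feas J P1 P12 h112 r p hp C hfeas hd1)
  have h2 := hLbS2 Ch C (split_of_feas J P2 P12 h212 r p hp C hfeas hd2)
  have e : ∀ Q : Finset J, ∑ j ∈ Q, (Ch j 0 + Ch j 1)
      = 2 * ∑ j ∈ Q, C j - 2 * ∑ j ∈ Q, p j / 4 := by
    intro Q
    rw [Finset.mul_sum, Finset.mul_sum, ← Finset.sum_sub_distrib]
    refine Finset.sum_congr rfl fun j _ => ?_
    simp only [hCh, Fin.isValue, Fin.val_zero, Fin.val_one]
    push_cast; ring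
  have hsum : ∑ j, C j = ∑ j ∈ P1, C j + ∑ j ∈ P2, C j + ∑ j ∈ P12, C j := by
    rw [← hcover, Finset.sum_union (Finset.disjoint_union_left.mpr ⟨h112, h212⟩),
      Finset.sum_union h12]
  rw [e P1] at h1
  rw [e P2] at h2
  rw [hLb1, hLb2, hsum]
  linarith
end

section
/- Let λ ∈ [0,1]. If LB1(λ) is a lower bound on the optimal value of the single-processor problem with P_1-jobs weighted 1 and P_{12}-job copies weighted λ, and LB2(λ) is a lower bound for the single-processor problem with P_2-jobs weighted 1 and P_{12}-job copies weighted 1−λ, then LB1(λ) + LB2(λ) is a lower bound on the optimal total tardiness of P2|fix_j, r_j|∑T_j. -/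
open Finset

/-- Let `λ ∈ [0,1]`. If `LB1` is a lower bound on the weighted total tardiness
of every feasible single-machine schedule of the `P1`- and `P12`-jobs (weights
`1` and `λ`), and `LB2` is such a lower bound for the `P2`- and `P12`-jobs
(weights `1` and `1 - λ`), then `LB1 + LB2` is a lower bound on the total
tardiness of every feasible schedule of `P2|fix_j, r_j|∑T_j`. -/
theorem stmt6 (J : Type*) [Fintype J] [DecidableEq J]
    (P1 P2 P12 : Finset J)
    (h12 : Disjoint P1 P2) (h112 : Disjoint P1 P12) (h212 : Disjoint P2 P12)
    (hcover : P1 ∪ P2 ∪ P12 = Finset.univ)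
    (r p d : J → ℝ)
    (lam : ℝ) (hlam : lam ∈ Set.Icc (0 : ℝ) 1)
    (LB1 LB2 : ℝ)
    (hLB1 : ∀ D : J → ℝ,
        (∀ j ∈ P1 ∪ P12, r j + p j ≤ D j) →
        (∀ j ∈ P1 ∪ P12, ∀ k ∈ P1 ∪ P12, j ≠ k →
            D j ≤ D k - p k ∨ D k ≤ D j - p j) →
        LB1 ≤ (∑ j ∈ P1, max (D j - d j) 0) + lam * ∑ j ∈ P12, max (D j - d j) 0)
    (hLB2 : ∀ D : J → ℝ,
        (∀ j ∈ P2 ∪ P12, r j + p j ≤ D j) →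
        (∀ j ∈ P2 ∪ P12, ∀ k ∈ P2 ∪ P12, j ≠ k →
            D j ≤ D k - p k ∨ D k ≤ D j - p j) →
        LB2 ≤ (∑ j ∈ P2, max (D j - d j) 0) +
          (1 - lam) * ∑ j ∈ P12, max (D j - d j) 0)
    (C : J → ℝ)
    (hfeas : ∀ j, r j + p j ≤ C j)
    (hd1 : ∀ j ∈ P1 ∪ P12, ∀ k ∈ P1 ∪ P12, j ≠ k →
        C j ≤ C k - p k ∨ C k ≤ C j - p j)
    (hd2 : ∀ j ∈ P2 ∪ P12, ∀ k ∈ P2 ∪ P12, j ≠ k →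
        C j ≤ C k - p k ∨ C k ≤ C j - p j) :
    LB1 + LB2 ≤ ∑ j, max (C j - d j) 0 := by
  have h1 := hLB1 C (fun j _ => hfeas j) hd1
  have h2 := hLB2 C (fun j _ => hfeas j) hd2
  have hsum : ∑ j, max (C j - d j) 0 =
      (∑ j ∈ P1, max (C j - d j) 0) + (∑ j ∈ P2, max (C j - d j) 0) +
        ∑ j ∈ P12, max (C j - d j) 0 := by
    rw [← hcover, Finset.sum_union (Finset.disjoint_union_left.mpr ⟨h112, h212⟩),
      Finset.sum_union h12]
  rw [hsum]
  nlinarith [h1, h2]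
end

section
/- Let C'_1 ≤ C'_2 ≤ ... ≤ C'_n be valid underestimates of the sorted completion times of any feasible schedule (i.e., for every feasible σ, C_[i](σ) ≥ C'_i for all i). Then the optimal value of the assignment problem min ∑_{i,j} x_{i,j}·w_j·max(C'_i − d_j, 0), over doubly stochastic 0-1 matrices x, is a lower bound on the weighted total tardiness ∑_j w_j·max(C_j(σ) − d_j, 0) of every feasible schedule σ. -/
open Finset

theorem stmt7_general (n : ℕ) (d w C' : Fin n → ℝ)
    (hw : ∀ j, 0 ≤ w j)
    (C : Fin n → ℝ)
    (hund : ∀ i : Fin n, C' i ≤ C (Tuple.sort C i)) :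
    (Finset.univ.inf' Finset.univ_nonempty
        fun π : Equiv.Perm (Fin n) => ∑ j, w j * max (C' (π j) - d j) 0)
      ≤ ∑ j, w j * max (C j - d j) 0 := by
  -- The schedule itself is a feasible assignment: job `j` goes to its rank `(Tuple.sort C)⁻¹ j`.
  set σ := Tuple.sort C
  refine (inf'_le _ (mem_univ σ⁻¹)).trans (sum_le_sum fun j _ => ?_)
  have hrank : C' (σ⁻¹ j) ≤ C j := by simpa using hund (σ⁻¹ j)
  exact mul_le_mul_of_nonneg_left (by gcongr) (hw j)

/-- Assignment lower bound for weighted total tardiness: if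
`C'_1 ≤ ... ≤ C'_n` underestimate the sorted completion times of a feasible
schedule `C` (i.e. `C' i ≤` the `i`-th smallest value of `C`), then the optimal
value of the assignment problem with costs `w j · max(C'_i - d j, 0)` (minimum
over all permutations, i.e. 0-1 doubly stochastic matrices) is a lower bound on
the weighted total tardiness `∑ j, w j · max(C j - d j, 0)`. -/
theorem stmt7 (n : ℕ) (d w C' : Fin n → ℝ)
    (hw : ∀ j, 0 ≤ w j) (hmono : Monotone C')
    (C : Fin n → ℝ)
    (hund : ∀ i : Fin n, C' i ≤ C (Tuple.sort C i)) :
    (Finset.univ.inf' Finset.univ_nonempty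
        fun π : Equiv.Perm (Fin n) => ∑ j, w j * max (C' (π j) - d j) 0)
      ≤ ∑ j, w j * max (C j - d j) 0 :=
  stmt7_general n d w C' hw C hund
end
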